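/- Characterization of all dual Gabor windows (Wexler–Raz): let Λ be a subgroup of ZMod N × ZMod N and g ∈ ℂ^N such that the Gabor frame operator S_{g,Λ} is invertible, and set g̃ = S_{g,Λ}^{−1} g (the canonical dual window). Then for h ∈ ℂ^N the reconstruction formula f = ∑_{λ∈Λ} ⟨f, π(λ)h⟩ · π(λ)g holds for all f ∈ ℂ^N if and only if ⟨h − g̃, π(μ)g⟩ = 0 for all μ ∈ Λ°. -/

import Mathlib

open Complex Finset

/-- The time-frequency shift `π(k,r)` on `ℂ^N ≅ (ZMod N → ℂ)`:
`(π(k,r)f)(j) = e^{2πi·rj/N} · f(j−k)`. -/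
noncomputable def tfShift (N : ℕ) (k r : ZMod N) : (ZMod N → ℂ) →ₗ[ℂ] (ZMod N → ℂ) where
  toFun f := fun j => Complex.exp (2 * Real.pi * Complex.I * (((r * j).val : ℂ) / (N : ℂ))) * f (j - k)
  map_add' f g := by
    funext j
    simp [mul_add]
  map_smul' c f := by
    funext j
    simp [Pi.smul_apply, smul_eq_mul]
    ring

/-- The inner product `⟨f,g⟩ = ∑ⱼ f(j)·conj(g(j))`, linear in the first argument. -/
noncomputable def inn {N : ℕ} [NeZero N] (f g : ZMod N → ℂ) : ℂ :=
  ∑ j, f j * starRingEnd ℂ (g j)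

/-- The short-time Fourier transform `V_g f(k,r) = ⟨f, π(k,r)g⟩`. -/
noncomputable def stft {N : ℕ} [NeZero N] (g f : ZMod N → ℂ) (k r : ZMod N) : ℂ :=
  inn f (tfShift N k r g)

/-- The adjoint subgroup `Λ° = {(k,r) : l·r − k·s = 0 in ZMod N for all (l,s) ∈ Λ}`,
as a set. -/
def adjSet {N : ℕ} (Λ : AddSubgroup (ZMod N × ZMod N)) : Set (ZMod N × ZMod N) :=
  {p | ∀ q ∈ Λ, q.1 * p.2 - p.1 * q.2 = 0}

/-- The underlying finite set of a subgroup `Λ` of `ZMod N × ZMod N`. -/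
noncomputable def subFinset {N : ℕ} [NeZero N] (Λ : AddSubgroup (ZMod N × ZMod N)) :
    Finset (ZMod N × ZMod N) :=
  Set.Finite.toFinset (Set.toFinite (Λ : Set (ZMod N × ZMod N)))

/-- The underlying finite set of the adjoint subgroup `Λ°`. -/
noncomputable def adjFinset {N : ℕ} [NeZero N] (Λ : AddSubgroup (ZMod N × ZMod N)) :
    Finset (ZMod N × ZMod N) :=
  Set.Finite.toFinset (Set.toFinite (adjSet Λ))

/-- The rank-one operator `f ↦ ⟨f,h⟩·g`. -/
noncomputable def rankOne {N : ℕ} [NeZero N] (g h : ZMod N → ℂ) :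
    (ZMod N → ℂ) →ₗ[ℂ] (ZMod N → ℂ) where
  toFun f := inn f h • g
  map_add' f f' := by
    simp [inn, add_mul, Finset.sum_add_distrib, add_smul]
  map_smul' c f := by
    simp [inn, Finset.mul_sum, mul_assoc, mul_smul, smul_smul]

/-- The Gabor frame-type operator `S_{g,h,Λ} f = ∑_{λ∈Λ} ⟨f, π(λ)h⟩ · π(λ)g`. -/
noncomputable def gaborTypeOp (N : ℕ) [NeZero N] (Λ : AddSubgroup (ZMod N × ZMod N))
    (g h : ZMod N → ℂ) : (ZMod N → ℂ) →ₗ[ℂ] (ZMod N → ℂ) :=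
  ∑ lam ∈ subFinset Λ, rankOne (tfShift N lam.1 lam.2 g) (tfShift N lam.1 lam.2 h)

/-!
The canonical dual `g̃ = S⁻¹ g` satisfies `S_{g,g̃} = S_{g,g} S⁻¹ = 1`, because `S⁻¹` is
self-adjoint and commutes with every `π(λ)`, `λ ∈ Λ`. Since `S_{g,h}` is additive in `h`, the
window `h` is dual iff `S_{g,h-g̃} = 0`, and `S_{g,u} = 0` iff `⟨u, π(μ)g⟩ = 0` for `μ ∈ Λ°`:
with `e = ZMod.stdAddChar` and `ω(λ,μ) = λ₁μ₂ - μ₁λ₂`, the commutation relation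
`π(μ)π(λ) = e(ω(λ,μ)) π(λ)π(μ)` gives
`tr (S_{g,u} π(μ)) = (∑_{λ∈Λ} e(ω(λ,μ))) ⟨π(μ)g, u⟩`, this character sum is `|Λ|` on `Λ°` and
`0` off it, and an operator whose traces against all time-frequency shifts vanish is zero
(Fourier inversion along its diagonals).
-/

open ZMod (stdAddChar)

section
variable {N : ℕ} [NeZero N]

lemma tfShift_apply (k r : ZMod N) (f : ZMod N → ℂ) (j : ZMod N) :
    tfShift N k r f j = stdAddChar (r * j) * f (j - k) := by
  rw [ZMod.stdAddChar_apply, ZMod.toCircle_apply]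
  simp [tfShift, mul_div_assoc]

lemma tfShift_tfShift (k r l s : ZMod N) (f : ZMod N → ℂ) :
    tfShift N k r (tfShift N l s f) = stdAddChar (-(s * k)) • tfShift N (k + l) (r + s) f := by
  funext j
  have hphase : stdAddChar (r * j) * stdAddChar (s * (j - k))
      = stdAddChar (-(s * k)) * stdAddChar ((r + s) * j) := by
    simp only [← AddChar.map_add_eq_mul]
    ring_nf
  simp only [tfShift_apply, Pi.smul_apply, smul_eq_mul, sub_sub, ← mul_assoc, hphase]

lemma tfShift_comm (k r l s : ZMod N) (f : ZMod N → ℂ) :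
    tfShift N k r (tfShift N l s f)
      = stdAddChar (l * r - k * s) • tfShift N l s (tfShift N k r f) := by
  rw [tfShift_tfShift, tfShift_tfShift, smul_smul, ← AddChar.map_add_eq_mul, add_comm l,
    add_comm s]
  ring_nf

lemma tfShift_single (k r j : ZMod N) :
    tfShift N k r (Pi.single j 1) = stdAddChar (r * (j + k)) • Pi.single (j + k) 1 := by
  funext i
  by_cases hi : i = j + k
  · simp [tfShift_apply, hi]
  · have hi' : i - k ≠ j := fun h => hi (by rw [← h, sub_add_cancel])
    simp [tfShift_apply, hi, hi']

lemma conj_inn (f g : ZMod N → ℂ) : starRingEnd ℂ (inn f g) = inn g f := by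
  simp [inn, mul_comm]

lemma inn_smul_left (c : ℂ) (f g : ZMod N → ℂ) : inn (c • f) g = c * inn f g := by
  simp [inn, Finset.mul_sum, mul_assoc]

lemma inn_smul_right (c : ℂ) (f g : ZMod N → ℂ) :
    inn f (c • g) = starRingEnd ℂ c * inn f g := by
  simp only [inn, Pi.smul_apply, smul_eq_mul, map_mul, Finset.mul_sum]
  exact Finset.sum_congr rfl fun j _ => by ring

lemma inn_sub_right (f g h : ZMod N → ℂ) : inn f (g - h) = inn f g - inn f h := by
  simp [inn, mul_sub, Finset.sum_sub_distrib]

lemma inn_sum_left {ι : Type*} (s : Finset ι) (v : ι → ZMod N → ℂ) (w : ZMod N → ℂ) :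
    inn (∑ i ∈ s, v i) w = ∑ i ∈ s, inn (v i) w := by
  simp only [inn, Finset.sum_apply, Finset.sum_mul]
  exact Finset.sum_comm

lemma inn_sum_right {ι : Type*} (s : Finset ι) (w : ZMod N → ℂ) (v : ι → ZMod N → ℂ) :
    inn w (∑ i ∈ s, v i) = ∑ i ∈ s, inn w (v i) := by
  simp only [inn, Finset.sum_apply, map_sum, Finset.mul_sum]
  exact Finset.sum_comm

lemma stdAddChar_mul_conj (x : ZMod N) :
    stdAddChar x * starRingEnd ℂ (stdAddChar x) = 1 := by
  rw [← AddChar.map_neg_eq_conj, ← AddChar.map_add_eq_mul, add_neg_cancel,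
    AddChar.map_zero_eq_one]

lemma inn_tfShift_tfShift (k r : ZMod N) (f g : ZMod N → ℂ) :
    inn (tfShift N k r f) (tfShift N k r g) = inn f g := by
  simp only [inn, tfShift_apply, map_mul]
  refine (Fintype.sum_equiv (Equiv.subRight k) _ _ fun j => ?_)
  simp only [Equiv.subRight_apply]
  linear_combination f (j - k) * starRingEnd ℂ (g (j - k)) * stdAddChar_mul_conj (r * j)

lemma mem_subFinset {Λ : AddSubgroup (ZMod N × ZMod N)} {x : ZMod N × ZMod N} :
    x ∈ subFinset Λ ↔ x ∈ Λ := Set.Finite.mem_toFinset _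

lemma sum_subFinset_add_left {M : Type*} [AddCommMonoid M] (Λ : AddSubgroup (ZMod N × ZMod N))
    {q : ZMod N × ZMod N} (hq : q ∈ Λ) (F : ZMod N × ZMod N → M) :
    ∑ x ∈ subFinset Λ, F (q + x) = ∑ x ∈ subFinset Λ, F x := by
  refine Finset.sum_nbij' (q + ·) (· - q) ?_ ?_ ?_ ?_ ?_ <;> intro x hx
  · exact mem_subFinset.2 (Λ.add_mem hq (mem_subFinset.1 hx))
  · exact mem_subFinset.2 (Λ.sub_mem (mem_subFinset.1 hx) hq)
  all_goals simp

lemma sum_subFinset_stdAddChar_of_mem {Λ : AddSubgroup (ZMod N × ZMod N)}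
    {μ : ZMod N × ZMod N} (hμ : μ ∈ adjSet Λ) :
    ∑ x ∈ subFinset Λ, stdAddChar (x.1 * μ.2 - μ.1 * x.2) = (subFinset Λ).card := by
  rw [Finset.card_eq_sum_ones, Nat.cast_sum, Nat.cast_one]
  refine Finset.sum_congr rfl fun x hx => ?_
  rw [hμ x (mem_subFinset.1 hx), AddChar.map_zero_eq_one]

lemma sum_subFinset_stdAddChar_of_notMem {Λ : AddSubgroup (ZMod N × ZMod N)}
    {μ : ZMod N × ZMod N} (hμ : μ ∉ adjSet Λ) :
    ∑ x ∈ subFinset Λ, stdAddChar (x.1 * μ.2 - μ.1 * x.2) = 0 := by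
  obtain ⟨q, hq, hne⟩ : ∃ q ∈ Λ, q.1 * μ.2 - μ.1 * q.2 ≠ 0 := by simpa [adjSet] using hμ
  refine eq_zero_of_mul_eq_self_left (b := stdAddChar (q.1 * μ.2 - μ.1 * q.2))
    (fun h => hne (ZMod.injective_stdAddChar (h.trans (AddChar.map_zero_eq_one _).symm))) ?_
  rw [Finset.mul_sum]
  conv_rhs => rw [← sum_subFinset_add_left Λ hq]
  refine Finset.sum_congr rfl fun x _ => ?_
  rw [← AddChar.map_add_eq_mul, Prod.fst_add, Prod.snd_add]
  ring_nf

lemma card_subFinset_ne_zero (Λ : AddSubgroup (ZMod N × ZMod N)) :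
    ((subFinset Λ).card : ℂ) ≠ 0 :=
  Nat.cast_ne_zero.2 (Finset.card_ne_zero.2 ⟨0, mem_subFinset.2 Λ.zero_mem⟩)

noncomputable def innFunctional (b : ZMod N → ℂ) : (ZMod N → ℂ) →ₗ[ℂ] ℂ where
  toFun f := inn f b
  map_add' f f' := by simp [inn, add_mul, Finset.sum_add_distrib]
  map_smul' c f := inn_smul_left c f b

lemma rankOne_apply (a b f : ZMod N → ℂ) : rankOne a b f = inn f b • a := rfl

lemma trace_rankOne_mul (a b : ZMod N → ℂ) (T : Module.End ℂ (ZMod N → ℂ)) :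
    LinearMap.trace ℂ _ (rankOne a b * T) = inn (T a) b := by
  have : rankOne a b * T = ((innFunctional b).comp T).smulRight a := LinearMap.ext fun _ => rfl
  rw [this, LinearMap.trace_smulRight]
  rfl

lemma rankOne_smul_smul {c : ℂ} (hc : c * starRingEnd ℂ c = 1) (a b : ZMod N → ℂ) :
    rankOne (c • a) (c • b) = rankOne a b := by
  refine LinearMap.ext fun f => ?_
  rw [rankOne_apply, rankOne_apply, inn_smul_right, smul_smul, mul_comm, ← mul_assoc, hc, one_mul]

lemma tfShift_mul_rankOne (k r : ZMod N) (a b : ZMod N → ℂ) :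
    tfShift N k r * rankOne a b = rankOne (tfShift N k r a) (tfShift N k r b) * tfShift N k r := by
  refine LinearMap.ext fun f => ?_
  simp only [Module.End.mul_apply, rankOne_apply, map_smul, inn_tfShift_tfShift]

lemma gaborTypeOp_commute_tfShift (Λ : AddSubgroup (ZMod N × ZMod N)) (g h : ZMod N → ℂ)
    {q : ZMod N × ZMod N} (hq : q ∈ Λ) : Commute (gaborTypeOp N Λ g h) (tfShift N q.1 q.2) := by
  refine Eq.symm ?_
  simp only [gaborTypeOp, Finset.mul_sum, Finset.sum_mul, tfShift_mul_rankOne, tfShift_tfShift,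
    rankOne_smul_smul (stdAddChar_mul_conj _)]
  exact sum_subFinset_add_left Λ hq
    fun x => rankOne (tfShift N x.1 x.2 g) (tfShift N x.1 x.2 h) * tfShift N q.1 q.2

lemma inn_gaborTypeOp_apply (Λ : AddSubgroup (ZMod N × ZMod N)) (g h f f' : ZMod N → ℂ) :
    inn (gaborTypeOp N Λ g h f) f' = inn f (gaborTypeOp N Λ h g f') := by
  simp only [gaborTypeOp, LinearMap.sum_apply, rankOne_apply, inn_sum_left, inn_sum_right,
    inn_smul_left, inn_smul_right, conj_inn, mul_comm]

lemma gaborTypeOp_sub_right (Λ : AddSubgroup (ZMod N × ZMod N)) (g h₁ h₂ : ZMod N → ℂ) :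
    gaborTypeOp N Λ g (h₁ - h₂) = gaborTypeOp N Λ g h₁ - gaborTypeOp N Λ g h₂ := by
  simp only [gaborTypeOp, ← Finset.sum_sub_distrib, map_sub]
  refine Finset.sum_congr rfl fun x _ => LinearMap.ext fun f => ?_
  simp only [LinearMap.sub_apply, rankOne_apply, inn_sub_right, sub_smul]

lemma gaborTypeOp_apply_window (Λ : AddSubgroup (ZMod N × ZMod N)) (g h : ZMod N → ℂ)
    {T : Module.End ℂ (ZMod N → ℂ)} (hcomm : ∀ q ∈ Λ, Commute T (tfShift N q.1 q.2))
    (hsymm : ∀ f f', inn (T f) f' = inn f (T f')) :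
    gaborTypeOp N Λ g (T h) = gaborTypeOp N Λ g h * T := by
  rw [gaborTypeOp, gaborTypeOp, Finset.sum_mul]
  refine Finset.sum_congr rfl fun x hx => LinearMap.ext fun f => ?_
  rw [Module.End.mul_apply, rankOne_apply, rankOne_apply, ← Module.End.mul_apply,
    ← (hcomm x (mem_subFinset.1 hx)).eq, Module.End.mul_apply, hsymm]

lemma trace_gaborTypeOp_mul_tfShift (Λ : AddSubgroup (ZMod N × ZMod N)) (g u : ZMod N → ℂ)
    (μ : ZMod N × ZMod N) :
    LinearMap.trace ℂ _ (gaborTypeOp N Λ g u * tfShift N μ.1 μ.2)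
      = (∑ x ∈ subFinset Λ, stdAddChar (x.1 * μ.2 - μ.1 * x.2))
          * inn (tfShift N μ.1 μ.2 g) u := by
  simp only [gaborTypeOp, Finset.sum_mul, map_sum, trace_rankOne_mul]
  refine Finset.sum_congr rfl fun x _ => ?_
  rw [tfShift_comm, inn_smul_left, inn_tfShift_tfShift]

lemma eq_zero_of_forall_sum_stdAddChar_mul_eq_zero {F : ZMod N → ℂ}
    (hF : ∀ r, ∑ j, stdAddChar (r * j) * F j = 0) : F = 0 := by
  rw [← ZMod.dft.map_eq_zero_iff]
  funext r
  simpa [ZMod.dft_apply, mul_comm] using hF (-r)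

lemma trace_mul_tfShift (T : Module.End ℂ (ZMod N → ℂ)) (k r : ZMod N) :
    LinearMap.trace ℂ _ (T * tfShift N k r)
      = ∑ j, stdAddChar (r * j) * T (Pi.single j 1) (j - k) := by
  rw [LinearMap.trace_eq_matrix_trace ℂ (Pi.basisFun ℂ (ZMod N)), LinearMap.toMatrix_eq_toMatrix',
    Matrix.trace]
  simp only [Matrix.diag, LinearMap.toMatrix'_apply, Module.End.mul_apply, tfShift_single,
    map_smul, Pi.smul_apply, smul_eq_mul]
  exact Fintype.sum_equiv (Equiv.addRight k) _ _ fun j => by simp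

lemma eq_zero_of_forall_trace_mul_tfShift_eq_zero (T : Module.End ℂ (ZMod N → ℂ))
    (hT : ∀ k r, LinearMap.trace ℂ _ (T * tfShift N k r) = 0) : T = 0 := by
  have hdiag (k : ZMod N) : (fun j => T (Pi.single j 1) (j - k)) = 0 :=
    eq_zero_of_forall_sum_stdAddChar_mul_eq_zero fun r =>
      (trace_mul_tfShift T k r).symm.trans (hT k r)
  refine LinearMap.pi_ext' fun b => LinearMap.ext_ring (funext fun a => ?_)
  simpa using congrFun (hdiag (b - a)) b

lemma gaborTypeOp_eq_zero_iff (Λ : AddSubgroup (ZMod N × ZMod N)) (g u : ZMod N → ℂ) :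
    gaborTypeOp N Λ g u = 0 ↔ ∀ μ ∈ adjSet Λ, inn u (tfShift N μ.1 μ.2 g) = 0 := by
  constructor
  · intro hS μ hμ
    have := trace_gaborTypeOp_mul_tfShift Λ g u μ
    rw [hS, zero_mul, map_zero, sum_subFinset_stdAddChar_of_mem hμ] at this
    rw [← conj_inn, (mul_eq_zero.1 this.symm).resolve_left (card_subFinset_ne_zero Λ), map_zero]
  · intro hμ
    refine eq_zero_of_forall_trace_mul_tfShift_eq_zero _ fun k r => ?_
    rw [trace_gaborTypeOp_mul_tfShift Λ g u (k, r)]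
    by_cases hkr : (k, r) ∈ adjSet Λ
    · rw [← conj_inn, hμ _ hkr, map_zero, mul_zero]
    · rw [sum_subFinset_stdAddChar_of_notMem hkr, zero_mul]

lemma inn_isUnit_inv_apply {S : Module.End ℂ (ZMod N → ℂ)} (hS : IsUnit S)
    (hsymm : ∀ f f', inn (S f) f' = inn f (S f')) (f f' : ZMod N → ℂ) :
    inn ((↑hS.unit⁻¹ : Module.End ℂ (ZMod N → ℂ)) f) f'
      = inn f ((↑hS.unit⁻¹ : Module.End ℂ (ZMod N → ℂ)) f') := by
  have hSS (x : ZMod N → ℂ) : S ((↑hS.unit⁻¹ : Module.End ℂ (ZMod N → ℂ)) x) = x :=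
    Module.End.isUnit_apply_inv_apply_of_isUnit hS x
  conv_lhs => rw [← hSS f']
  rw [← hsymm, hSS]

lemma gaborTypeOp_canonicalDual_eq_one (Λ : AddSubgroup (ZMod N × ZMod N)) (g : ZMod N → ℂ)
    (hS : IsUnit (gaborTypeOp N Λ g g)) :
    gaborTypeOp N Λ g ((↑hS.unit⁻¹ : Module.End ℂ (ZMod N → ℂ)) g) = 1 := by
  rw [gaborTypeOp_apply_window Λ g g, hS.mul_val_inv]
  · exact fun q hq => Commute.units_inv_left (gaborTypeOp_commute_tfShift Λ g g hq)
  · exact inn_isUnit_inv_apply hS (inn_gaborTypeOp_apply Λ g g)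

end

/-- **Characterization of all dual Gabor windows (Wexler–Raz)**: assume the Gabor frame
operator `S_{g,Λ} = S_{g,g,Λ}` is invertible and let `g̃ = S_{g,Λ}⁻¹ g` be the canonical dual
window. Then `h` satisfies the reconstruction formula `f = ∑_{λ∈Λ} ⟨f, π(λ)h⟩ · π(λ)g` for
all `f ∈ ℂ^N` if and only if `⟨h − g̃, π(μ)g⟩ = 0` for all `μ ∈ Λ°`. -/
theorem dual_window_characterization (N : ℕ) [NeZero N]
    (Λ : AddSubgroup (ZMod N × ZMod N)) (g : ZMod N → ℂ)
    (hS : IsUnit (gaborTypeOp N Λ g g)) (h : ZMod N → ℂ) :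
    (∀ f : ZMod N → ℂ, gaborTypeOp N Λ g h f = f) ↔
      ∀ mu ∈ adjSet Λ,
        inn (h - (↑hS.unit⁻¹ : (ZMod N → ℂ) →ₗ[ℂ] (ZMod N → ℂ)) g)
          (tfShift N mu.1 mu.2 g) = 0 := by
  rw [← gaborTypeOp_eq_zero_iff, gaborTypeOp_sub_right, gaborTypeOp_canonicalDual_eq_one Λ g hS,
    sub_eq_zero]
  exact ⟨fun hrec => LinearMap.ext hrec, fun hrec f => by rw [hrec, Module.End.one_apply]⟩
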